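/- arXiv:2605.18662 — 2 statements merged into one kernel-verified Lean document; each statement's English description precedes it below -/
import Mathlib

section
/- (Gradient bound on the orthogonal direction.) Let d, k, n be positive integers, γ, σ, C > 0 and η ∈ (0,1). Let w*, ŵ ∈ ℝ^{kd} with ‖w*‖₂ ≤ 1 and ‖ŵ‖₂ ≤ 1, suppose κ := ⟨ŵ, w*⟩ ∈ (0,1), and set w' := (w* − κŵ)/√(1−κ²). Let I be a finite index set partitioned into three disjoint parts P, O, D, with samples (x_i, y_i) ∈ ℝ^d × {1,…,k} and labels ŷ_i ∈ {1,…,k}. Assume: (i) for every i ∈ P ∪ O and every y' ≠ y_i, ⟨w*_{y_i} − w*_{y'}, x_i⟩ ≥ γ; (ii) for every i ∈ P, ŷ_i ≠ y_i and ⟨ŵ_{y_i} − ŵ_{ŷ_i}, x_i⟩ ≤ γ/2; (iii) for every i ∈ O, either ŷ_i = y_i or ⟨ŵ_{y_i} − ŵ_{ŷ_i}, x_i⟩ ≤ γ; (iv) |D| ≤ ηn, and there exist centers μ_i ∈ ℝ^d (i ∈ D) such that for every i ∈ D and every y' ≠ y_i, ⟨w*_{y_i} − w*_{y'}, μ_i⟩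 ≥ γ, for every subset T ⊆ D, ‖Σ_{i∈T}(x_i − μ_i)‖₂ ≤ C·σ·√(|T|·n), and for every i ∈ D, ⟨ŵ_{ŷ_i} − ŵ_{y_i}, x_i⟩ ≥ −γ; (v) |P|/4 > 2Cσn√η / γ. Then the vector g := (1/γ)·Σ_{i∈I}(Ψ(x_i, ŷ_i) − Ψ(x_i, y_i)) satisfies ⟨g, w'⟩ ≤ −(√5/4)·|P|. -/
/-!
Write `v := w* − κ ŵ`, so that each sample contributes
`⟨Ψ(x_i, ŷ_i) − Ψ(x_i, y_i), v⟩ = κ ⟨ŵ_{y_i} − ŵ_{ŷ_i}, x_i⟩ − ⟨w*_{y_i} − w*_{ŷ_i}, x_i⟩`.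
On `P` the margins give at most `−(1 − κ/2) γ`, on `O` at most `0`. On `D` the same margin
argument, applied to the centers `μ_i`, leaves only `⟨Ψ(x_i − μ_i, ŷ_i) − Ψ(x_i − μ_i, y_i), w*⟩`;
since the blocks of `Σ_i Ψ(z_i, c_i)` are the sums of the `z_i` over the fibres of `c`, the
deviation bound controls its norm by `Cσ√(|D| n) ≤ Cσ n √η`. Together with (v) the total is at most
`−γ |P| (3 − 2κ)/4`, and `3 − 2κ ≥ √5 · √(1 − κ²)` because the difference of squares is `(3κ − 2)²`.
-/

open scoped BigOperators RealInnerProductSpace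
open Finset

/-- The class-sensitive feature map `Ψ : ℝ^d × {1,…,k} → ℝ^{kd}`: the `y`-th block of
`d` coordinates of `Psi d k x y` equals `x`, the remaining coordinates are zero. -/
noncomputable def Psi (d k : ℕ) (x : EuclideanSpace ℝ (Fin d)) (y : Fin k) :
    EuclideanSpace ℝ (Fin k × Fin d) :=
  WithLp.toLp 2 (fun p : Fin k × Fin d => if p.1 = y then x p.2 else 0)

/-- The `y`-th block `w_y ∈ ℝ^d` of a vector `w ∈ ℝ^{kd}`. -/
noncomputable def block (d k : ℕ) (w : EuclideanSpace ℝ (Fin k × Fin d)) (y : Fin k) :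
    EuclideanSpace ℝ (Fin d) :=
  WithLp.toLp 2 (fun j => w (y, j))

section Features

variable {d k : ℕ}

lemma inner_Psi (x : EuclideanSpace ℝ (Fin d)) (b : Fin k)
    (w : EuclideanSpace ℝ (Fin k × Fin d)) :
    ⟪Psi d k x b, w⟫ = ⟪block d k w b, x⟫ := by
  simp [PiLp.inner_apply, Psi, block, Fintype.sum_prod_type, mul_comm]

lemma inner_Psi_sub_Psi (x : EuclideanSpace ℝ (Fin d)) (a b : Fin k)
    (w : EuclideanSpace ℝ (Fin k × Fin d)) :
    ⟪Psi d k x b - Psi d k x a, w⟫ = ⟪block d k w b - block d k w a, x⟫ := by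
  rw [inner_sub_left, inner_sub_left, inner_Psi, inner_Psi]

lemma sum_Psi_apply {ι : Type*} (T : Finset ι) (v : ι → EuclideanSpace ℝ (Fin d))
    (c : ι → Fin k) (b : Fin k) (j : Fin d) :
    (∑ i ∈ T, Psi d k (v i) (c i)) (b, j) = (∑ i ∈ T with c i = b, v i) j := by
  simp [Psi, sum_filter, WithLp.ofLp_sum, Finset.sum_apply, apply_ite WithLp.ofLp, ite_apply,
    eq_comm]

lemma norm_sq_sum_Psi {ι : Type*} (T : Finset ι) (v : ι → EuclideanSpace ℝ (Fin d))
    (c : ι → Fin k) :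
    ‖∑ i ∈ T, Psi d k (v i) (c i)‖ ^ 2 = ∑ b, ‖∑ i ∈ T with c i = b, v i‖ ^ 2 := by
  simp only [EuclideanSpace.norm_sq_eq, Fintype.sum_prod_type, sum_Psi_apply]

lemma norm_sum_Psi_le {ι : Type*} (T : Finset ι) (v : ι → EuclideanSpace ℝ (Fin d))
    (c : ι → Fin k) {B : ℝ} (hB : 0 ≤ B) (hdev : ∀ S ⊆ T, ‖∑ i ∈ S, v i‖ ≤ B * √(#S)) :
    ‖∑ i ∈ T, Psi d k (v i) (c i)‖ ≤ B * √(#T) := by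
  have hfiber (b : Fin k) :
      ‖∑ i ∈ T with c i = b, v i‖ ^ 2 ≤ B ^ 2 * (#{i ∈ T | c i = b} : ℝ) := by
    calc _ ≤ (B * √(#{i ∈ T | c i = b})) ^ 2 := by
          gcongr; exact hdev _ (filter_subset _ _)
      _ = _ := by rw [mul_pow, Real.sq_sqrt (Nat.cast_nonneg _)]
  have hsq : ‖∑ i ∈ T, Psi d k (v i) (c i)‖ ^ 2 ≤ (B * √(#T)) ^ 2 := by
    calc _ ≤ ∑ b, B ^ 2 * (#{i ∈ T | c i = b} : ℝ) := by
          rw [norm_sq_sum_Psi]; exact sum_le_sum fun b _ => hfiber b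
      _ = (B * √(#T)) ^ 2 := by
          rw [← mul_sum, mul_pow, Real.sq_sqrt (Nat.cast_nonneg _),
            card_eq_sum_card_fiberwise (fun i _ => mem_univ (c i)), Nat.cast_sum]
  exact le_of_sq_le_sq hsq (by positivity)

lemma inner_Psi_sub_Psi_sub_smul (x : EuclideanSpace ℝ (Fin d)) (a b : Fin k)
    (w w' : EuclideanSpace ℝ (Fin k × Fin d)) (κ : ℝ) :
    ⟪Psi d k x b - Psi d k x a, w - κ • w'⟫ =
      κ * ⟪block d k w' a - block d k w' b, x⟫ - ⟪block d k w a - block d k w b, x⟫ := by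
  simp only [inner_sub_left, inner_sub_right, real_inner_smul_right, inner_Psi]
  ring

end Features

lemma sqrt_five_mul_sqrt_one_sub_sq_le {κ : ℝ} (hκ : κ ≤ 3 / 2) :
    √5 * √(1 - κ ^ 2) ≤ 3 - 2 * κ := by
  rw [← Real.sqrt_mul (by norm_num)]
  refine Real.sqrt_le_iff.2 ⟨by linarith, ?_⟩
  nlinarith [sq_nonneg (3 * κ - 2)]

section Margins

variable {ι : Type*} {d k : ℕ} {x : ι → EuclideanSpace ℝ (Fin d)} {y yhat : ι → Fin k}
  {wstar what : EuclideanSpace ℝ (Fin k × Fin d)} {κ γ : ℝ}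

lemma inner_sum_Psi_sub_Psi_le_of_mistakes {P : Finset ι} (hκ : 0 ≤ κ)
    (hmargin : ∀ i ∈ P, ∀ y' : Fin k, y' ≠ y i →
      γ ≤ ⟪block d k wstar (y i) - block d k wstar y', x i⟫)
    (hP : ∀ i ∈ P, yhat i ≠ y i ∧
      ⟪block d k what (y i) - block d k what (yhat i), x i⟫ ≤ γ / 2) :
    ⟪∑ i ∈ P, (Psi d k (x i) (yhat i) - Psi d k (x i) (y i)), wstar - κ • what⟫ ≤
      #P * -((1 - κ / 2) * γ) := by
  rw [sum_inner, ← nsmul_eq_mul]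
  refine sum_le_card_nsmul _ _ _ fun i hi => ?_
  obtain ⟨hne, hhat⟩ := hP i hi
  rw [inner_Psi_sub_Psi_sub_smul]
  nlinarith [hmargin i hi (yhat i) hne]

lemma inner_sum_Psi_sub_Psi_nonpos_of_margin {O : Finset ι} (hκ0 : 0 ≤ κ) (hκ1 : κ ≤ 1)
    (hγ : 0 ≤ γ)
    (hmargin : ∀ i ∈ O, ∀ y' : Fin k, y' ≠ y i →
      γ ≤ ⟪block d k wstar (y i) - block d k wstar y', x i⟫)
    (hO : ∀ i ∈ O, yhat i = y i ∨
      ⟪block d k what (y i) - block d k what (yhat i), x i⟫ ≤ γ) :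
    ⟪∑ i ∈ O, (Psi d k (x i) (yhat i) - Psi d k (x i) (y i)), wstar - κ • what⟫ ≤ 0 := by
  rw [sum_inner]
  refine sum_nonpos fun i hi => ?_
  by_cases hne : yhat i = y i
  · simp [hne]
  rw [inner_Psi_sub_Psi_sub_smul]
  have hhat := (hO i hi).resolve_left hne
  nlinarith [hmargin i hi (yhat i) hne]

lemma inner_sum_Psi_sub_Psi_le_of_deviation {D : Finset ι} {μ : ι → EuclideanSpace ℝ (Fin d)}
    {B : ℝ} (hκ0 : 0 ≤ κ) (hκ1 : κ ≤ 1) (hγ : 0 ≤ γ) (hB : 0 ≤ B) (hwstar : ‖wstar‖ ≤ 1)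
    (hmargin : ∀ i ∈ D, ∀ y' : Fin k, y' ≠ y i →
      γ ≤ ⟪block d k wstar (y i) - block d k wstar y', μ i⟫)
    (hdev : ∀ T ⊆ D, ‖∑ i ∈ T, (x i - μ i)‖ ≤ B * √(#T))
    (hhinge : ∀ i ∈ D, -γ ≤ ⟪block d k what (yhat i) - block d k what (y i), x i⟫) :
    ⟪∑ i ∈ D, (Psi d k (x i) (yhat i) - Psi d k (x i) (y i)), wstar - κ • what⟫ ≤
      2 * B * √(#D) := by
  -- the margin `γ` of `w*` at the center `μ_i` pays for the term `κ γ` coming from `ŵ`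
  have hsample (i) (hi : i ∈ D) :
      ⟪Psi d k (x i) (yhat i) - Psi d k (x i) (y i), wstar - κ • what⟫ ≤
        ⟪Psi d k (x i - μ i) (yhat i) - Psi d k (x i - μ i) (y i), wstar⟫ := by
    by_cases hne : yhat i = y i
    · simp [hne]
    have hμ := hmargin i hi (yhat i) hne
    have hhat := hhinge i hi
    rw [inner_Psi_sub_Psi_sub_smul, inner_Psi_sub_Psi, inner_sub_right]
    simp only [inner_sub_left] at hμ hhat ⊢
    nlinarith
  calc _ ≤ ∑ i ∈ D, ⟪Psi d k (x i - μ i) (yhat i) - Psi d k (x i - μ i) (y i), wstar⟫ := by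
        rw [sum_inner]; exact sum_le_sum hsample
    _ = ⟪∑ i ∈ D, Psi d k (x i - μ i) (yhat i) - ∑ i ∈ D, Psi d k (x i - μ i) (y i), wstar⟫ := by
        rw [← sum_sub_distrib, sum_inner]
    _ ≤ ‖∑ i ∈ D, Psi d k (x i - μ i) (yhat i) - ∑ i ∈ D, Psi d k (x i - μ i) (y i)‖ :=
        (real_inner_le_norm _ _).trans (mul_le_of_le_one_right (norm_nonneg _) hwstar)
    _ ≤ B * √(#D) + B * √(#D) :=
        norm_sub_le_of_le (norm_sum_Psi_le _ _ _ hB hdev) (norm_sum_Psi_le _ _ _ hB hdev)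
    _ = 2 * B * √(#D) := by ring

end Margins

theorem stmt_6_general {ι : Type*} [DecidableEq ι] (d k n : ℕ)
    (γ σ C : ℝ) (hγ : 0 < γ) (hσ : 0 < σ) (hC : 0 < C)
    (η : ℝ)
    (wstar what : EuclideanSpace ℝ (Fin k × Fin d))
    (hwstar : ‖wstar‖ ≤ 1)
    (κ : ℝ) (hκ0 : 0 < κ) (hκ1 : κ < 1)
    (P O D : Finset ι) (hPO : Disjoint P O) (hPD : Disjoint P D) (hOD : Disjoint O D)
    (x : ι → EuclideanSpace ℝ (Fin d)) (y yhat : ι → Fin k)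
    (hmargin : ∀ i ∈ P ∪ O, ∀ y' : Fin k, y' ≠ y i →
      γ ≤ ⟪block d k wstar (y i) - block d k wstar y', x i⟫)
    (hP : ∀ i ∈ P, yhat i ≠ y i ∧
      ⟪block d k what (y i) - block d k what (yhat i), x i⟫ ≤ γ / 2)
    (hO : ∀ i ∈ O, yhat i = y i ∨
      ⟪block d k what (y i) - block d k what (yhat i), x i⟫ ≤ γ)
    (hDcard : (D.card : ℝ) ≤ η * n)
    (μ : ι → EuclideanSpace ℝ (Fin d))
    (hDmargin : ∀ i ∈ D, ∀ y' : Fin k, y' ≠ y i →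
      γ ≤ ⟪block d k wstar (y i) - block d k wstar y', μ i⟫)
    (hDdev : ∀ T ⊆ D, ‖∑ i ∈ T, (x i - μ i)‖ ≤ C * σ * Real.sqrt (T.card * n))
    (hDhinge : ∀ i ∈ D, -γ ≤ ⟪block d k what (yhat i) - block d k what (y i), x i⟫)
    (hPbig : 2 * C * σ * n * Real.sqrt η / γ < (P.card : ℝ) / 4) :
    ⟪(1/γ) • ∑ i ∈ P ∪ O ∪ D, (Psi d k (x i) (yhat i) - Psi d k (x i) (y i)),
        (Real.sqrt (1 - κ^2))⁻¹ • (wstar - κ • what)⟫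
      ≤ -(Real.sqrt 5 / 4) * (P.card : ℝ) := by
  have hdev : ∀ T ⊆ D, ‖∑ i ∈ T, (x i - μ i)‖ ≤ (C * σ * √n) * √(#T) := fun T hT =>
    (hDdev T hT).trans_eq (by rw [Real.sqrt_mul (Nat.cast_nonneg _)]; ring)
  have hDsqrt : √n * √(#D) ≤ n * √η := by
    calc √n * √(#D) ≤ √n * √(η * n) := by gcongr
      _ = n * √η := by
        rw [← Real.sqrt_mul (Nat.cast_nonneg _), show (n : ℝ) * (η * n) = η * n ^ 2 by ring,
          Real.sqrt_mul' _ (sq_nonneg _), Real.sqrt_sq (Nat.cast_nonneg _), mul_comm]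
  have hPsum := inner_sum_Psi_sub_Psi_le_of_mistakes hκ0.le
    (fun i hi => hmargin i (mem_union_left _ hi)) hP
  have hOsum := inner_sum_Psi_sub_Psi_nonpos_of_margin hκ0.le hκ1.le hγ.le
    (fun i hi => hmargin i (mem_union_right _ hi)) hO
  have hDsum := inner_sum_Psi_sub_Psi_le_of_deviation hκ0.le hκ1.le hγ.le (by positivity)
    hwstar hDmargin hdev hDhinge
  have htotal : ⟪∑ i ∈ P ∪ O ∪ D, (Psi d k (x i) (yhat i) - Psi d k (x i) (y i)),
      wstar - κ • what⟫ ≤ -(γ * #P * (3 - 2 * κ) / 4) := by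
    rw [sum_union (disjoint_union_left.2 ⟨hPD, hOD⟩), sum_union hPO, inner_add_left,
      inner_add_left]
    have := (div_lt_iff₀ hγ).1 hPbig
    nlinarith [mul_le_mul_of_nonneg_left hDsqrt (by positivity : 0 ≤ C * σ)]
  have hs : 0 < √(1 - κ ^ 2) := Real.sqrt_pos.2 (by nlinarith)
  have h5 := sqrt_five_mul_sqrt_one_sub_sq_le (by linarith : κ ≤ 3 / 2)
  rw [real_inner_smul_left, real_inner_smul_right, one_div, ← mul_assoc, ← mul_inv,
    ← div_eq_inv_mul, div_le_iff₀ (by positivity)]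
  nlinarith [mul_le_mul_of_nonneg_left h5 (by positivity : 0 ≤ γ * #P)]

/-- gradient bound on the orthogonal direction
`w' := (w* − κ·what)/√(1−κ²)`, where `κ := ⟨what, w*⟩ ∈ (0,1)`. -/
theorem stmt_6 {ι : Type*} [DecidableEq ι] (d k n : ℕ) (hd : 0 < d) (hk : 0 < k) (hn : 0 < n)
    (γ σ C : ℝ) (hγ : 0 < γ) (hσ : 0 < σ) (hC : 0 < C)
    (η : ℝ) (hη0 : 0 < η) (hη1 : η < 1)
    (wstar what : EuclideanSpace ℝ (Fin k × Fin d))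
    (hwstar : ‖wstar‖ ≤ 1) (hwhat : ‖what‖ ≤ 1)
    (κ : ℝ) (hκdef : κ = ⟪what, wstar⟫) (hκ0 : 0 < κ) (hκ1 : κ < 1)
    (P O D : Finset ι) (hPO : Disjoint P O) (hPD : Disjoint P D) (hOD : Disjoint O D)
    (x : ι → EuclideanSpace ℝ (Fin d)) (y yhat : ι → Fin k)
    (hmargin : ∀ i ∈ P ∪ O, ∀ y' : Fin k, y' ≠ y i →
      γ ≤ ⟪block d k wstar (y i) - block d k wstar y', x i⟫)
    (hP : ∀ i ∈ P, yhat i ≠ y i ∧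
      ⟪block d k what (y i) - block d k what (yhat i), x i⟫ ≤ γ / 2)
    (hO : ∀ i ∈ O, yhat i = y i ∨
      ⟪block d k what (y i) - block d k what (yhat i), x i⟫ ≤ γ)
    (hDcard : (D.card : ℝ) ≤ η * n)
    (μ : ι → EuclideanSpace ℝ (Fin d))
    (hDmargin : ∀ i ∈ D, ∀ y' : Fin k, y' ≠ y i →
      γ ≤ ⟪block d k wstar (y i) - block d k wstar y', μ i⟫)
    (hDdev : ∀ T ⊆ D, ‖∑ i ∈ T, (x i - μ i)‖ ≤ C * σ * Real.sqrt (T.card * n))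
    (hDhinge : ∀ i ∈ D, -γ ≤ ⟪block d k what (yhat i) - block d k what (y i), x i⟫)
    (hPbig : 2 * C * σ * n * Real.sqrt η / γ < (P.card : ℝ) / 4) :
    ⟪(1/γ) • ∑ i ∈ P ∪ O ∪ D, (Psi d k (x i) (yhat i) - Psi d k (x i) (y i)),
        (Real.sqrt (1 - κ^2))⁻¹ • (wstar - κ • what)⟫
      ≤ -(Real.sqrt 5 / 4) * (P.card : ℝ) :=
  stmt_6_general d k n γ σ C hγ hσ hC η wstar what hwstar κ hκ0 hκ1 P O D hPO hPD hOD x y yhat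
    hmargin hP hO hDcard μ hDmargin hDdev hDhinge hPbig
end

section
/- (Dirty-sample contribution in the w* direction.) Let d, k, n be positive integers, γ, C, σ > 0, and w* ∈ ℝ^{kd} with ‖w*‖₂ ≤ 1. Let D be a finite index set with samples (x_i, y_i) ∈ ℝ^d × {1,…,k}, labels ŷ_i ∈ {1,…,k}, and centers μ_i ∈ ℝ^d such that for every i ∈ D and every y' ≠ y_i, ⟨w*_{y_i} − w*_{y'}, μ_i⟩ ≥ γ, and such that for every subset T ⊆ D, ‖Σ_{i∈T}(x_i − μ_i)‖₂ ≤ C·σ·√(|T|·n). Then Σ_{i∈D} ⟨w*_{ŷ_i} − w*_{y_i}, x_i⟩ ≤ −γ·|{ i ∈ D : ŷ_i ≠ y_i }| + 2Cσ·√(|D|·n). -/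
open scoped BigOperators RealInnerProductSpace
open Finset

/-!
Only the misclassified samples `S = {i ∈ D | ŷᵢ ≠ yᵢ}` contribute. Writing `xᵢ = μᵢ + (xᵢ - μᵢ)`,
the margin condition bounds the `μ`-part of each of them by `-γ`. The noise part splits into
`∑ ⟪w*_{ŷᵢ}, xᵢ - μᵢ⟫` and `-∑ ⟪w*_{yᵢ}, xᵢ - μᵢ⟫`; grouping each by label turns it into
`∑_y ⟪w*_y, ∑_{fibre of y} (xᵢ - μᵢ)⟫`, and Cauchy–Schwarz over the labels together with the
deviation bound on every fibre gives at most `‖w*‖ · Cσ√(|S| n)` for each.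
-/

section LabelledSums

variable {E ι κ : Type*} [NormedAddCommGroup E] [InnerProductSpace ℝ E]

theorem sum_inner_sub_comp_le_neg_mul_card (w : κ → E) (S : Finset ι) (a b : ι → κ) (μ : ι → E)
    {γ : ℝ} (hmargin : ∀ i ∈ S, γ ≤ ⟪w (b i) - w (a i), μ i⟫) :
    ∑ i ∈ S, ⟪w (a i) - w (b i), μ i⟫ ≤ -γ * #S := by
  rw [mul_comm, ← nsmul_eq_mul, ← sum_const]
  refine sum_le_sum fun i hi => ?_
  rw [← neg_sub, inner_neg_left]
  exact neg_le_neg (hmargin i hi)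

variable [Fintype κ] [DecidableEq κ]

theorem sum_inner_comp_le (w : κ → E) (S : Finset ι) (z : ι → κ) (v : ι → E) {c : ℝ}
    (hc : 0 ≤ c) (hdev : ∀ y, ‖∑ i ∈ S with z i = y, v i‖ ≤ c * √(#{i ∈ S | z i = y})) :
    ∑ i ∈ S, ⟪w (z i), v i⟫ ≤ √(∑ y, ‖w y‖ ^ 2) * (c * √(#S)) := by
  have hfibre : ∀ y, ∑ i ∈ S with z i = y, ⟪w (z i), v i⟫ = ⟪w y, ∑ i ∈ S with z i = y, v i⟫ := by
    intro y
    rw [inner_sum]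
    exact sum_congr rfl fun i hi => by rw [(mem_filter.1 hi).2]
  have hcard : ∑ y, (#{i ∈ S | z i = y} : ℝ) = #S := by
    exact_mod_cast (card_eq_sum_card_fiberwise fun i _ => mem_univ (z i)).symm
  calc ∑ i ∈ S, ⟪w (z i), v i⟫
      = ∑ y, ⟪w y, ∑ i ∈ S with z i = y, v i⟫ := by
        rw [← sum_fiberwise S z]
        exact sum_congr rfl fun y _ => hfibre y
    _ ≤ ∑ y, ‖w y‖ * (c * √(#{i ∈ S | z i = y})) :=
        sum_le_sum fun y _ =>
          (real_inner_le_norm _ _).trans (mul_le_mul_of_nonneg_left (hdev y) (norm_nonneg _))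
    _ = c * ∑ y, √(‖w y‖ ^ 2) * √(#{i ∈ S | z i = y}) := by
        rw [mul_sum]
        exact sum_congr rfl fun y _ => by rw [Real.sqrt_sq (norm_nonneg _)]; ring
    _ ≤ c * (√(∑ y, ‖w y‖ ^ 2) * √(∑ y, (#{i ∈ S | z i = y} : ℝ))) :=
        mul_le_mul_of_nonneg_left
          (Real.sum_sqrt_mul_sqrt_le _ (fun _ => by positivity) fun _ => by positivity) hc
    _ = √(∑ y, ‖w y‖ ^ 2) * (c * √(#S)) := by rw [hcard]; ring

theorem sum_inner_sub_comp_le (w : κ → E) (S : Finset ι) (a b : ι → κ) (v : ι → E) {c : ℝ}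
    (hc : 0 ≤ c) (hdev : ∀ T ⊆ S, ‖∑ i ∈ T, v i‖ ≤ c * √(#T)) :
    ∑ i ∈ S, ⟪w (a i) - w (b i), v i⟫ ≤ 2 * √(∑ y, ‖w y‖ ^ 2) * (c * √(#S)) := by
  have hfibres : ∀ z : ι → κ, ∀ y, ‖∑ i ∈ S with z i = y, v i‖ ≤ c * √(#{i ∈ S | z i = y}) :=
    fun z y => hdev _ (filter_subset _ _)
  have ha := sum_inner_comp_le w S a v hc (hfibres a)
  have hb := sum_inner_comp_le (fun y => -w y) S b v hc (hfibres b)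
  simp only [norm_neg, inner_neg_left, sum_neg_distrib] at hb
  simp only [inner_sub_left, sum_sub_distrib]
  linarith

end LabelledSums

theorem sum_norm_block_sq (d k : ℕ) (w : EuclideanSpace ℝ (Fin k × Fin d)) :
    ∑ y, ‖block d k w y‖ ^ 2 = ‖w‖ ^ 2 := by
  simp only [EuclideanSpace.real_norm_sq_eq, block, Fintype.sum_prod_type]

theorem sqrt_card_mul_le {ι : Type*} {S D : Finset ι} (h : S ⊆ D) (n : ℕ) :
    √(#S) * √n ≤ √(#D * n) := by
  rw [Real.sqrt_mul (Nat.cast_nonneg _)]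
  gcongr

theorem stmt_13_general {ι : Type*} (d k n : ℕ)
    (γ C σ : ℝ) (hC : 0 < C) (hσ : 0 < σ)
    (wstar : EuclideanSpace ℝ (Fin k × Fin d)) (hwstar : ‖wstar‖ ≤ 1)
    (D : Finset ι) (x μ : ι → EuclideanSpace ℝ (Fin d)) (y yhat : ι → Fin k)
    (hmargin : ∀ i ∈ D, ∀ y' : Fin k, y' ≠ y i →
      γ ≤ ⟪block d k wstar (y i) - block d k wstar y', μ i⟫)
    (hdev : ∀ T ⊆ D, ‖∑ i ∈ T, (x i - μ i)‖ ≤ C * σ * Real.sqrt (T.card * n)) :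
    ∑ i ∈ D, ⟪block d k wstar (yhat i) - block d k wstar (y i), x i⟫
      ≤ -γ * ((D.filter fun i => yhat i ≠ y i).card : ℝ)
          + 2 * C * σ * Real.sqrt (D.card * n) := by
  set w := block d k wstar
  set S := D.filter fun i => yhat i ≠ y i
  have hSD : S ⊆ D := filter_subset _ _
  have hrestrict : ∑ i ∈ D, ⟪w (yhat i) - w (y i), x i⟫ = ∑ i ∈ S, ⟪w (yhat i) - w (y i), x i⟫ :=
    (sum_filter_of_ne (p := fun i => yhat i ≠ y i) fun i _ h hi =>
      h (by rw [hi, sub_self, inner_zero_left])).symm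
  have hmarginS : ∑ i ∈ S, ⟪w (yhat i) - w (y i), μ i⟫ ≤ -γ * #S :=
    sum_inner_sub_comp_le_neg_mul_card w S yhat y μ fun i hi =>
      hmargin i (hSD hi) _ (mem_filter.1 hi).2
  have hnoise : ∑ i ∈ S, ⟪w (yhat i) - w (y i), x i - μ i⟫ ≤ 2 * C * σ * √(#D * n) := by
    have h := sum_inner_sub_comp_le w S yhat y (fun i => x i - μ i) (c := C * σ * √n)
      (by positivity) fun T hT => by
        simpa [Real.sqrt_mul (Nat.cast_nonneg _), mul_assoc, mul_comm (√n)]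
          using hdev T (hT.trans hSD)
    rw [sum_norm_block_sq, Real.sqrt_sq (norm_nonneg _)] at h
    calc _ ≤ 2 * ‖wstar‖ * (C * σ * √n * √(#S)) := h
      _ = 2 * ‖wstar‖ * (C * σ * (√(#S) * √n)) := by ring
      _ ≤ 2 * 1 * (C * σ * √(#D * n)) := by gcongr; exact sqrt_card_mul_le hSD n
      _ = 2 * C * σ * √(#D * n) := by ring
  have hsplit : ∀ i, ⟪w (yhat i) - w (y i), x i⟫
      = ⟪w (yhat i) - w (y i), μ i⟫ + ⟪w (yhat i) - w (y i), x i - μ i⟫ := fun i => by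
    rw [← inner_add_right, add_sub_cancel]
  rw [hrestrict, sum_congr rfl fun i _ => hsplit i, sum_add_distrib]
  linarith

/-- dirty-sample contribution in the `w*` direction. -/
theorem stmt_13 {ι : Type*} (d k n : ℕ) (hd : 0 < d) (hk : 0 < k) (hn : 0 < n)
    (γ C σ : ℝ) (hγ : 0 < γ) (hC : 0 < C) (hσ : 0 < σ)
    (wstar : EuclideanSpace ℝ (Fin k × Fin d)) (hwstar : ‖wstar‖ ≤ 1)
    (D : Finset ι) (x μ : ι → EuclideanSpace ℝ (Fin d)) (y yhat : ι → Fin k)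
    (hmargin : ∀ i ∈ D, ∀ y' : Fin k, y' ≠ y i →
      γ ≤ ⟪block d k wstar (y i) - block d k wstar y', μ i⟫)
    (hdev : ∀ T ⊆ D, ‖∑ i ∈ T, (x i - μ i)‖ ≤ C * σ * Real.sqrt (T.card * n)) :
    ∑ i ∈ D, ⟪block d k wstar (yhat i) - block d k wstar (y i), x i⟫
      ≤ -γ * ((D.filter fun i => yhat i ≠ y i).card : ℝ)
          + 2 * C * σ * Real.sqrt (D.card * n) :=
  stmt_13_general d k n γ C σ hC hσ wstar hwstar D x μ y yhat hmargin hdev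
end
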